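/- Let Γ = G ⋊_φ ℤ with G a torsion group. For every infinite virtually cyclic subgroup H of Γ, there exists a subgroup T of G and an automorphism θ of T such that Comm_Γ(H) ≅ T ⋊_θ ℤ and for each g ∈ T there exists n ≥ 1 with θⁿ(g) = g. -/

import Mathlib

def VirtuallyCyclic (G : Type*) [Group G] : Prop :=
  ∃ C : Subgroup G, IsCyclic C ∧ C.FiniteIndex


def conjSub {Γ : Type*} [Group Γ] (x : Γ) (H : Subgroup Γ) : Subgroup Γ :=
  H.map (MulAut.conj x⁻¹).toMonoidHom

def commSet {Γ : Type*} [Group Γ] (H : Subgroup Γ) : Set Γ :=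
  {x | Infinite ↥(H ⊓ conjSub x H)}

/-!
Since `G` is torsion, the kernel of the projection `ρ : Γ → ℤ` is torsion, so an element of `Γ`
has infinite order exactly when its image in `ℤ` is nonzero. Let `⟨c⟩` be an infinite cyclic
subgroup of finite index in `H`. If `H ∩ H^x` is infinite it contains some `c^a ≠ 1`, and
`x c^a x⁻¹ ∈ H` forces `x c^b x⁻¹ = c^b` for some `b ≠ 0`: comparing images in `ℤ` rules out
`x c^a x⁻¹ = c^b` with `a ≠ b`. Hence `Comm_Γ(H)` is the group `K` of elements commuting with a
nontrivial power of `c`. Its image in `ℤ` is generated by `ρ t` for some `t ∈ K`, so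
`K = (K ∩ G) ⋊ ⟨t⟩` with `θ` the conjugation by `t`. Since `t` commutes with a power of `c` and
`ker ρ` is torsion, some power `t^a` with `a ≠ 0` is a power of `c`; every `g ∈ K ∩ G` commutes
with a power of `c`, so a nonzero power of `θ` fixes `g`.
-/

open Subgroup SemidirectProduct

namespace Subgroup

variable {Γ : Type*} [Group Γ]

def powCentralizer (c : Γ) : Subgroup Γ where
  carrier := {x | ∃ m : ℤ, m ≠ 0 ∧ Commute x (c ^ m)}
  one_mem' := ⟨1, one_ne_zero, Commute.one_left _⟩
  mul_mem' := by
    rintro x y ⟨m, hm, hx⟩ ⟨n, hn, hy⟩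
    refine ⟨m * n, mul_ne_zero hm hn, ?_⟩
    rw [zpow_mul]
    refine (hx.zpow_right n).mul_left ?_
    rw [← zpow_mul, mul_comm, zpow_mul]
    exact hy.zpow_right m
  inv_mem' := by
    rintro x ⟨m, hm, hx⟩
    exact ⟨m, hm, hx.inv_left⟩

lemma mem_powCentralizer {c x : Γ} :
    x ∈ powCentralizer c ↔ ∃ m : ℤ, m ≠ 0 ∧ Commute x (c ^ m) :=
  Iff.rfl

lemma infinite_of_finiteIndex [Infinite Γ] (H : Subgroup Γ) [H.FiniteIndex] : Infinite H := by
  by_contra hH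
  rw [not_infinite_iff_finite] at hH
  have := (finite_iff_finite_and_finiteIndex H).mpr ⟨hH, inferInstance⟩
  exact not_finite Γ

lemma exists_zpow_mem_of_relIndex_ne_zero {H L : Subgroup Γ} {c : Γ}
    (hc : (zpowers c).relIndex H ≠ 0) (hLH : L ≤ H) [Infinite L] :
    ∃ m : ℤ, m ≠ 0 ∧ c ^ m ∈ L := by
  have : ((zpowers c).subgroupOf L).FiniteIndex :=
    ⟨fun h => hc (relIndex_eq_zero_of_le_right hLH h)⟩
  have := infinite_of_finiteIndex ((zpowers c).subgroupOf L)
  obtain ⟨⟨⟨u, huL⟩, hu⟩, hne⟩ := exists_ne (1 : (zpowers c).subgroupOf L)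
  obtain ⟨m, rfl⟩ := mem_zpowers_iff.mp (mem_subgroupOf.mp hu)
  refine ⟨m, ?_, huL⟩
  rintro rfl
  exact hne (by ext; simp)

lemma exists_mem_map_eq_zpowers {Q : Type*} [Group Q] [IsCyclic Q] (f : Γ →* Q)
    (K : Subgroup Γ) : ∃ t ∈ K, K.map f = zpowers (f t) := by
  obtain ⟨e, he⟩ := (K.map f).isCyclic_iff_exists_zpowers_eq_top.mp inferInstance
  obtain ⟨t, htK, rfl⟩ : e ∈ K.map f := he ▸ mem_zpowers e
  exact ⟨t, htK, he.symm⟩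

end Subgroup

lemma VirtuallyCyclic.exists_zpowers_relIndex_ne_zero {Γ : Type*} [Group Γ] {H : Subgroup Γ}
    [Infinite H] (hH : VirtuallyCyclic H) :
    ∃ c ∈ H, ¬IsOfFinOrder c ∧ (zpowers c).relIndex H ≠ 0 := by
  obtain ⟨C, hC, hCH⟩ := hH
  obtain ⟨c, rfl⟩ := C.isCyclic_iff_exists_zpowers_eq_top.mp hC
  have hsub : (zpowers (c : Γ)).subgroupOf H = zpowers c := by
    rw [subgroupOf, ← coe_subtype, ← MonoidHom.map_zpowers]
    exact comap_map_eq_self_of_injective H.subtype_injective _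
  refine ⟨c, c.2, ?_, ?_⟩
  · have := infinite_of_finiteIndex (zpowers c)
    exact Submonoid.isOfFinOrder_coe.not.mpr (infinite_zpowers.mp (Set.infinite_coe_iff.mp this))
  · rw [relIndex, hsub]
    exact FiniteIndex.index_ne_zero

section HomToInt

variable {Γ : Type*} [Group Γ] (ρ : Γ →* Multiplicative ℤ)

lemma infinite_zpowers_of_map_ne_one {y : Γ} (hy : ρ y ≠ 1) : Infinite (zpowers y) :=
  (infinite_zpowers.mpr fun h => hy (ρ.isOfFinOrder h).eq_one').to_subtype

lemma injective_zpow_map_of_map_ne_one {c : Γ} (hc : ρ c ≠ 1) :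
    Function.Injective fun n : ℤ => ρ c ^ n :=
  injective_zpow_iff_not_isOfFinOrder.mpr (by rwa [isOfFinOrder_iff_eq_one])

lemma eq_of_mul_zpow_mul_inv_eq_zpow {c x : Γ} (hc : ρ c ≠ 1) {a b : ℤ}
    (h : x * c ^ a * x⁻¹ = c ^ b) : a = b :=
  injective_zpow_map_of_map_ne_one ρ hc <| by
    simpa [mul_comm (ρ x)] using congrArg ρ h

lemma map_zpow_ne_one {c : Γ} (hc : ρ c ≠ 1) {m : ℤ} (hm : m ≠ 0) : ρ (c ^ m) ≠ 1 := by
  simpa using (injective_zpow_map_of_map_ne_one ρ hc).ne hm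

lemma commSet_eq_powCentralizer {H : Subgroup Γ} {c : Γ} (hcH : c ∈ H) (hc : ρ c ≠ 1)
    (hrel : (zpowers c).relIndex H ≠ 0) : commSet H = powCentralizer c := by
  ext x
  constructor
  · intro (_ : Infinite ↥(H ⊓ conjSub x H))
    obtain ⟨a, ha, -, h, hH, hxa⟩ :=
      exists_zpow_mem_of_relIndex_ne_zero (L := H ⊓ conjSub x H) hrel inf_le_left
    have hy : x * c ^ a * x⁻¹ ∈ H := by
      simp only [MulEquiv.coe_toMonoidHom, MulAut.conj_apply, inv_inv] at hxa
      simpa [← hxa, mul_assoc] using hH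
    have := infinite_zpowers_of_map_ne_one ρ (y := x * c ^ a * x⁻¹)
      (by simpa [mul_comm (ρ x)] using map_zpow_ne_one ρ hc ha)
    obtain ⟨b, hb, k, hk⟩ := exists_zpow_mem_of_relIndex_ne_zero hrel (zpowers_le.mpr hy)
    simp only [conj_zpow, ← zpow_mul] at hk
    obtain rfl := eq_of_mul_zpow_mul_inv_eq_zpow ρ hc hk
    exact ⟨a * k, hb, mul_inv_eq_iff_eq_mul.mp hk⟩
  · rintro ⟨m, hm, hxm⟩
    have hle : zpowers (c ^ m) ≤ H ⊓ conjSub x H := by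
      refine zpowers_le.mpr ⟨H.zpow_mem hcH m, c ^ m, H.zpow_mem hcH m, ?_⟩
      simp [hxm.inv_left.eq]
    have := infinite_zpowers_of_map_ne_one ρ (map_zpow_ne_one ρ hc hm)
    exact Infinite.of_injective (inclusion hle) (inclusion_injective hle)

lemma exists_zpow_eq_zpow_of_commute (hρ : ∀ w, ρ w = 1 → IsOfFinOrder w) {x y : Γ}
    (hxy : Commute x y) (hy : ρ y ≠ 1) : ∃ a : ℤ, a ≠ 0 ∧ ∃ b : ℤ, x ^ a = y ^ b := by
  set p := Multiplicative.toAdd (ρ y)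
  set q := Multiplicative.toAdd (ρ x)
  have hp : p ≠ 0 := fun h => hy (Multiplicative.toAdd.injective h)
  -- `x ^ p` and `y ^ q` have the same image under `ρ`, so their quotient has finite order
  have hw : ρ (x ^ p * (y ^ q)⁻¹) = 1 := by
    apply Multiplicative.toAdd.injective
    simp [p, q, mul_comm]
  obtain ⟨r, hr, hwr⟩ := isOfFinOrder_iff_zpow_eq_one.mp (hρ _ hw)
  refine ⟨p * r, mul_ne_zero hp hr, q * r, ?_⟩
  rwa [((hxy.zpow_zpow p q).inv_right).mul_zpow, inv_zpow, mul_inv_eq_one, ← zpow_mul,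
    ← zpow_mul] at hwr

end HomToInt

lemma MulAut.exists_pow_apply_eq_self {M : Type*} [Group M] (σ : MulAut M) {g : M} {n : ℤ}
    (hn : n ≠ 0) (h : (σ ^ n) g = g) : ∃ k : ℕ, 1 ≤ k ∧ (σ ^ k) g = g := by
  refine ⟨n.natAbs, Int.natAbs_pos.mpr hn, ?_⟩
  rcases Int.natAbs_eq n with hn' | hn'
  · rwa [hn', zpow_natCast] at h
  · rw [hn', zpow_neg, zpow_natCast, MulAut.inv_apply] at h
    exact ((MulEquiv.symm_apply_eq _).mp h).symm

namespace SemidirectProduct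

section

variable {N G : Type*} [Group N] [Group G] {φ : G →* MulAut N}

lemma isOfFinOrder_of_rightHom_eq_one (hN : IsMulTorsion N) {x : N ⋊[φ] G}
    (hx : rightHom x = 1) : IsOfFinOrder x := by
  obtain ⟨g, rfl⟩ : x ∈ (inl : N →* N ⋊[φ] G).range := by rwa [range_inl_eq_ker_rightHom]
  exact inl.isOfFinOrder (hN g)

end

variable {N : Type*} [Group N] {ψ : Multiplicative ℤ →* MulAut N}
  (K : Subgroup (N ⋊[ψ] Multiplicative ℤ)) {t : N ⋊[ψ] Multiplicative ℤ}

lemma mem_normalizer_map_comap_inl (ht : t ∈ K) :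
    t ∈ normalizer ((K.comap inl).map (inl : N →* N ⋊[ψ] Multiplicative ℤ) : Set _) := by
  rw [map_comap_eq, range_inl_eq_ker_rightHom]
  exact inf_normalizer_le_normalizer_inf ⟨by simp [normalizer_eq_top], le_normalizer ht⟩

/-- Conjugation by `t`, transported along `inl` from the image of `K.comap inl` in `N ⋊ ℤ`. -/
noncomputable def conjComapInl (ht : t ∈ K) : MulAut (K.comap inl) :=
  (MulAut.congr ((K.comap inl).equivMapOfInjective inl inl_injective)).symm
    (((K.comap inl).map inl).normalizerMonoidHom ⟨t, mem_normalizer_map_comap_inl K ht⟩)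

lemma inl_conjComapInl_zpow_apply (ht : t ∈ K) (n : ℤ) (g : K.comap inl) :
    inl ((conjComapInl K ht ^ n) g : N) = t ^ n * inl (g : N) * (t ^ n)⁻¹ := by
  rw [conjComapInl, ← map_zpow, ← map_zpow, MulAut.congr_symm_apply, MulEquiv.trans_apply,
    MulEquiv.trans_apply, ← coe_equivMapOfInjective_apply _ _ inl_injective,
    MulEquiv.apply_symm_apply]
  rfl

lemma conjComapInl_zpow_apply_eq_self_iff (ht : t ∈ K) (n : ℤ) (g : K.comap inl) :
    (conjComapInl K ht ^ n) g = g ↔ Commute (t ^ n) (inl (g : N)) := by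
  rw [Subtype.ext_iff, ← inl_inj (φ := ψ), inl_conjComapInl_zpow_apply, mul_inv_eq_iff_eq_mul]
  rfl

noncomputable def liftConjComapInl (ht : t ∈ K) :
    K.comap inl ⋊[zpowersHom (MulAut _) (conjComapInl K ht)] Multiplicative ℤ →*
      N ⋊[ψ] Multiplicative ℤ :=
  lift (inl.comp (K.comap inl).subtype) (zpowersHom _ t) fun z => by
    refine MonoidHom.ext fun g => ?_
    simp only [MonoidHom.comp_apply, MulEquiv.coe_toMonoidHom, MulAut.conj_apply,
      zpowersHom_apply, coe_subtype]
    exact inl_conjComapInl_zpow_apply K ht z.toAdd g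

lemma liftConjComapInl_apply (ht : t ∈ K) (p) :
    liftConjComapInl K ht p = inl (p.left : N) * t ^ p.right.toAdd :=
  rfl

lemma range_liftConjComapInl (ht : t ∈ K) (hK : K.map rightHom ≤ zpowers (rightHom t)) :
    (liftConjComapInl K ht).range = K := by
  apply le_antisymm
  · rintro _ ⟨p, rfl⟩
    exact K.mul_mem p.left.2 (K.zpow_mem ht _)
  · intro y hy
    obtain ⟨n, hn⟩ := mem_zpowers_iff.mp (hK ⟨y, hy, rfl⟩)
    have hyt : y * (t ^ n)⁻¹ ∈ inl.range := by
      rw [range_inl_eq_ker_rightHom, MonoidHom.mem_ker, map_mul, map_inv, map_zpow, hn,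
        mul_inv_cancel]
    obtain ⟨g, hg⟩ := hyt
    refine ⟨⟨⟨g, ?_⟩, Multiplicative.ofAdd n⟩, ?_⟩
    · rw [mem_comap, hg]
      exact K.mul_mem hy (K.inv_mem (K.zpow_mem ht n))
    · change inl g * t ^ n = y
      rw [hg, inv_mul_cancel_right]

lemma liftConjComapInl_injective (ht : t ∈ K) (ht' : rightHom t ≠ 1) :
    Function.Injective (liftConjComapInl K ht) := by
  rw [injective_iff_map_eq_one]
  rintro ⟨g, n⟩ hp
  rw [liftConjComapInl_apply] at hp
  have hn : n.toAdd = 0 := by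
    apply injective_zpow_map_of_map_ne_one rightHom ht'
    simpa only [map_mul, rightHom_inl, one_mul, map_zpow, zpow_zero, map_one] using
      congrArg rightHom hp
  rw [hn, zpow_zero, mul_one, ← map_one inl, inl_inj] at hp
  exact SemidirectProduct.ext (Subtype.ext hp) (Multiplicative.toAdd.injective hn)

end SemidirectProduct

theorem stmt11 {G : Type*} [Group G] (hG : Monoid.IsTorsion G) (φ : MulAut G)
    (H : Subgroup (G ⋊[zpowersHom (MulAut G) φ] Multiplicative ℤ))
    [Infinite H] (hH : VirtuallyCyclic H) :
    ∃ (T : Subgroup G) (θ : MulAut T)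
      (f : (T ⋊[zpowersHom (MulAut T) θ] Multiplicative ℤ) →*
        (G ⋊[zpowersHom (MulAut G) φ] Multiplicative ℤ)),
      Function.Injective f ∧ Set.range f = commSet H ∧
      ∀ g : T, ∃ n : ℕ, 1 ≤ n ∧ (θ ^ n) g = g := by
  have hρ (w : G ⋊[zpowersHom (MulAut G) φ] Multiplicative ℤ) (hw : rightHom w = 1) :
      IsOfFinOrder w :=
    isOfFinOrder_of_rightHom_eq_one hG hw
  obtain ⟨c, hcH, hc, hrel⟩ := hH.exists_zpowers_relIndex_ne_zero
  have hρc : rightHom c ≠ 1 := fun h => hc (hρ c h)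
  obtain ⟨t, htK, hKt⟩ := exists_mem_map_eq_zpowers rightHom (powCentralizer c)
  have hρt : rightHom t ≠ 1 := by
    have hρcK : rightHom c ∈ (powCentralizer c).map rightHom :=
      mem_map_of_mem _ (mem_powCentralizer.mpr ⟨1, one_ne_zero, (Commute.refl c).zpow_right 1⟩)
    rintro h
    rw [hKt, h, zpowers_one_eq_bot, mem_bot] at hρcK
    exact hρc hρcK
  refine ⟨_, conjComapInl _ htK, liftConjComapInl _ htK, liftConjComapInl_injective _ htK hρt,
    ?_, fun g => ?_⟩
  · rw [← MonoidHom.coe_range, range_liftConjComapInl _ htK hKt.le,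
      commSet_eq_powCentralizer rightHom hcH hρc hrel]
  · obtain ⟨m, hm, hgm⟩ := mem_powCentralizer.mp (mem_comap.mp g.2)
    obtain ⟨m', hm', htm'⟩ := mem_powCentralizer.mp htK
    obtain ⟨a, ha, b, hab⟩ :=
      exists_zpow_eq_zpow_of_commute rightHom hρ htm' (map_zpow_ne_one rightHom hρc hm')
    refine MulAut.exists_pow_apply_eq_self _ (mul_ne_zero ha hm)
      ((conjComapInl_zpow_apply_eq_self_iff _ _ _ _).mpr ?_)
    rw [zpow_mul, hab, ← zpow_mul, ← zpow_mul, show m' * (b * m) = m * (m' * b) by ring,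
      zpow_mul]
    exact (hgm.zpow_right _).symm
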